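/- arXiv:2210.05734 — 4 statements merged into one kernel-verified Lean document; each statement's English description precedes it below -/
import Mathlib

section
/- The solution δ of the undamped equation δ'' = ε + Kδ² with δ(0) = δ'(0) = 0 and ε, K > 0 is strictly increasing on (0, T) for any T in its interval of existence, and blows up in finite time. -/
/-!
Since `δ'' = ε + K δ² > 0`, the velocity `δ'` increases from `δ'(0) = 0`, so it is positive for
`τ > 0` and `δ` is strictly increasing. Multiplying the equation by `δ' ≥ 0` gives the energy
inequality `δ'² ≥ (2K/3) δ³`, i.e. `δ' ≥ c δ^{3/2}` with `c = √(2K/3)`. Hence `(√δ)⁻¹` decreases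
with slope at most `-c/2` as soon as `δ > 0`, so this positive quantity would turn negative in
finite time if the solution existed on all of `[0, ∞)`.
-/

open Real Set

section Monotonicity

variable {D : Set ℝ} {f f' : ℝ → ℝ}

lemma Convex.strictMonoOn_of_hasDerivAt_pos (hD : Convex ℝ D)
    (hf : ∀ x ∈ D, HasDerivAt f (f' x) x) (hf' : ∀ x ∈ interior D, 0 < f' x) :
    StrictMonoOn f D :=
  strictMonoOn_of_hasDerivWithinAt_pos hD (fun x hx ↦ (hf x hx).continuousAt.continuousWithinAt)
    (fun x hx ↦ (hf x (interior_subset hx)).hasDerivWithinAt) hf'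

lemma Convex.monotoneOn_of_hasDerivAt_nonneg (hD : Convex ℝ D)
    (hf : ∀ x ∈ D, HasDerivAt f (f' x) x) (hf' : ∀ x ∈ interior D, 0 ≤ f' x) :
    MonotoneOn f D :=
  monotoneOn_of_hasDerivWithinAt_nonneg hD (fun x hx ↦ (hf x hx).continuousAt.continuousWithinAt)
    (fun x hx ↦ (hf x (interior_subset hx)).hasDerivWithinAt) hf'

lemma Convex.antitoneOn_of_hasDerivAt_nonpos (hD : Convex ℝ D)
    (hf : ∀ x ∈ D, HasDerivAt f (f' x) x) (hf' : ∀ x ∈ interior D, f' x ≤ 0) :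
    AntitoneOn f D :=
  antitoneOn_of_hasDerivWithinAt_nonpos hD (fun x hx ↦ (hf x hx).continuousAt.continuousWithinAt)
    (fun x hx ↦ (hf x (interior_subset hx)).hasDerivWithinAt) hf'

end Monotonicity

lemma not_forall_pos_of_hasDerivAt_le_neg {f f' : ℝ → ℝ} {a c : ℝ} (hc : 0 < c)
    (hf : ∀ x ∈ Ici a, HasDerivAt f (f' x) x) (hf' : ∀ x ∈ Ici a, f' x ≤ -c) :
    ¬ ∀ x ∈ Ici a, 0 < f x := by
  intro hpos
  have hanti : AntitoneOn (fun x ↦ f x + c * x) (Ici a) :=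
    (convex_Ici a).antitoneOn_of_hasDerivAt_nonpos
      (fun x hx ↦ (hf x hx).add ((hasDerivAt_id x).const_mul c))
      (fun x hx ↦ by have := hf' x (interior_subset hx); simp only [mul_one]; linarith)
  set b := a + f a / c
  have hab : a ≤ b := le_add_of_nonneg_right (div_pos (hpos a self_mem_Ici) hc).le
  have hdecay : f b + c * b ≤ f a + c * a := hanti self_mem_Ici hab hab
  have hcb : c * b = c * a + f a := by simp only [b, mul_add, mul_div_cancel₀ _ hc.ne']
  linarith [hpos b hab]

lemma not_forall_pos_of_hasDerivAt_ge_mul_sqrt_pow_three {y y' : ℝ → ℝ} {a c : ℝ} (hc : 0 < c)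
    (hy : ∀ t ∈ Ici a, HasDerivAt y (y' t) t) (hgrowth : ∀ t ∈ Ici a, c * √(y t) ^ 3 ≤ y' t) :
    ¬ ∀ t ∈ Ici a, 0 < y t := by
  intro hpos
  refine not_forall_pos_of_hasDerivAt_le_neg (f := fun t ↦ (√(y t))⁻¹) (half_pos hc)
    (fun t ht ↦ (((hasDerivAt_sqrt (hpos t ht).ne').comp t (hy t ht)).inv
      (sqrt_pos.2 (hpos t ht)).ne')) (fun t ht ↦ ?_) (fun t ht ↦ inv_pos.2 (sqrt_pos.2 (hpos t ht)))
  have hs : 0 < √(y t) := sqrt_pos.2 (hpos t ht)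
  have hslope : c / 2 * √(y t) ^ 2 ≤ 1 / (2 * √(y t)) * y' t := by
    rw [one_div_mul_eq_div, le_div_iff₀ (by positivity)]
    nlinarith [hgrowth t ht]
  rw [Function.comp_apply, neg_div, neg_le_neg_iff, le_div_iff₀ (by positivity)]
  exact hslope

def IsSolutionOn (ε K : ℝ) (δ δ' : ℝ → ℝ) (D : Set ℝ) : Prop :=
  ∀ τ ∈ D, HasDerivAt δ (δ' τ) τ ∧ HasDerivAt δ' (ε + K * δ τ ^ 2) τ

namespace IsSolutionOn

variable {ε K : ℝ} {δ δ' : ℝ → ℝ} {D : Set ℝ}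

lemma velocity_pos (hs : IsSolutionOn ε K δ δ' D) (hD : Convex ℝ D) (hε : 0 < ε) (hK : 0 ≤ K)
    (h0 : 0 ∈ D) (hv0 : δ' 0 = 0) {τ : ℝ} (hτ : τ ∈ D) (hτ0 : 0 < τ) : 0 < δ' τ := by
  have hmono : StrictMonoOn δ' D :=
    hD.strictMonoOn_of_hasDerivAt_pos (fun x hx ↦ (hs x hx).2) fun x _ ↦ by positivity
  simpa only [hv0] using hmono h0 hτ hτ0

lemma velocity_nonneg (hs : IsSolutionOn ε K δ δ' D) (hD : Convex ℝ D) (hε : 0 < ε)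
    (hK : 0 ≤ K) (hDnn : D ⊆ Ici 0) (h0 : 0 ∈ D) (hv0 : δ' 0 = 0) {τ : ℝ} (hτ : τ ∈ D) :
    0 ≤ δ' τ := by
  rcases (mem_Ici.1 (hDnn hτ)).eq_or_lt' with rfl | hτ0
  · exact hv0.ge
  · exact (hs.velocity_pos hD hε hK h0 hv0 hτ hτ0).le

lemma strictMonoOn (hs : IsSolutionOn ε K δ δ' D) (hD : Convex ℝ D) (hε : 0 < ε) (hK : 0 ≤ K)
    (hDnn : D ⊆ Ici 0) (h0 : 0 ∈ D) (hv0 : δ' 0 = 0) : StrictMonoOn δ D :=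
  hD.strictMonoOn_of_hasDerivAt_pos (fun x hx ↦ (hs x hx).1) fun x hx ↦
    hs.velocity_pos hD hε hK h0 hv0 (interior_subset hx)
      (by simpa only [interior_Ici, mem_Ioi] using interior_mono hDnn hx)

lemma energy_le (hs : IsSolutionOn ε K δ δ' D) (hD : Convex ℝ D) (hε : 0 < ε) (hK : 0 ≤ K)
    (hDnn : D ⊆ Ici 0) (h0 : 0 ∈ D) (hδ0 : δ 0 = 0) (hv0 : δ' 0 = 0) {τ : ℝ} (hτ : τ ∈ D) :
    2 * K / 3 * δ τ ^ 3 ≤ δ' τ ^ 2 := by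
  have hmono : MonotoneOn (fun t ↦ δ' t ^ 2 - 2 * K / 3 * δ t ^ 3) D := by
    refine hD.monotoneOn_of_hasDerivAt_nonneg
      (fun t ht ↦ (((hs t ht).2.pow 2).sub (((hs t ht).1.pow 3).const_mul (2 * K / 3))))
      fun t ht ↦ ?_
    have := hs.velocity_nonneg hD hε hK hDnn h0 hv0 (interior_subset ht)
    push_cast
    nlinarith
  have := hmono h0 hτ (hDnn hτ)
  simp only [hδ0, hv0] at this
  linarith

end IsSolutionOn

lemma not_isSolutionOn_Ici {ε K : ℝ} {δ δ' : ℝ → ℝ} (hε : 0 < ε) (hK : 0 < K) (hδ0 : δ 0 = 0)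
    (hv0 : δ' 0 = 0) : ¬ IsSolutionOn ε K δ δ' (Ici 0) := by
  intro hs
  have hD : Convex ℝ (Ici (0 : ℝ)) := convex_Ici 0
  have h0 : (0 : ℝ) ∈ Ici 0 := self_mem_Ici
  have hpos : ∀ t ∈ Ici (1 : ℝ), 0 < δ t := fun t ht ↦ by
    have h1 : (0 : ℝ) < t := one_pos.trans_le ht
    simpa only [hδ0] using
      hs.strictMonoOn hD hε hK.le subset_rfl h0 hv0 h0 (mem_Ici.2 h1.le) h1
  have hc : 0 < √(2 * K / 3) := sqrt_pos.2 (by positivity)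
  refine not_forall_pos_of_hasDerivAt_ge_mul_sqrt_pow_three hc
    (fun t ht ↦ (hs t (mem_Ici.2 (zero_le_one.trans ht))).1) (fun t ht ↦ ?_) hpos
  have ht0 : t ∈ Ici (0 : ℝ) := mem_Ici.2 (zero_le_one.trans ht)
  refine le_of_pow_le_pow_left₀ two_ne_zero
    (hs.velocity_nonneg hD hε hK.le subset_rfl h0 hv0 ht0) ?_
  rw [mul_pow, sq_sqrt (by positivity), ← pow_mul, mul_comm 3 2, pow_mul, sq_sqrt (hpos t ht).le]
  exact hs.energy_le hD hε hK.le subset_rfl h0 hδ0 hv0 ht0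

theorem stmt_4 (K ε : ℝ) (hK : 0 < K) (hε : 0 < ε) :
    (∀ (δ δ' : ℝ → ℝ) (T : ℝ), 0 < T →
      δ 0 = 0 → δ' 0 = 0 →
      (∀ τ ∈ Set.Ico (0 : ℝ) T, HasDerivAt δ (δ' τ) τ) →
      (∀ τ ∈ Set.Ico (0 : ℝ) T, HasDerivAt δ' (ε + K * δ τ ^ 2) τ) →
      StrictMonoOn δ (Set.Ioo 0 T)) ∧
    (∀ (δ δ' : ℝ → ℝ),
      δ 0 = 0 → δ' 0 = 0 →
      ¬ ((∀ τ ∈ Set.Ici (0 : ℝ), HasDerivAt δ (δ' τ) τ) ∧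
         (∀ τ ∈ Set.Ici (0 : ℝ), HasDerivAt δ' (ε + K * δ τ ^ 2) τ))) := by
  refine ⟨fun δ δ' T hT _ hv0 hδ hδ' ↦ ?_, fun δ δ' hδ0 hv0 ⟨hδ, hδ'⟩ ↦ ?_⟩
  · have hs : IsSolutionOn ε K δ δ' (Ico 0 T) := fun τ hτ ↦ ⟨hδ τ hτ, hδ' τ hτ⟩
    exact (hs.strictMonoOn (convex_Ico 0 T) hε hK.le Ico_subset_Ici_self ⟨le_rfl, hT⟩ hv0).mono
      Ioo_subset_Ico_self
  · exact not_isSolutionOn_Ici hε hK hδ0 hv0 fun τ hτ ↦ ⟨hδ τ hτ, hδ' τ hτ⟩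
end

section
/- Let z₁ ≈ 2.3381 denote the negated largest (i.e., smallest in absolute value) zero of the Airy function Ai, so Ai(−z₁) = 0 and Ai(−z) > 0 for 0 ≤ z < z₁. Then the solution δ̄(τ̄) = K^{−2/3}c^{1/3}ν^{1/3}·Ai'(−z)/Ai(−z) of c·δ̄' = ντ̄ + Kδ̄² blows up to +∞ as τ̄ → τ̄∞⁻ with τ̄∞ = z₁·(Kν/c²)^{−1/3}; in particular the delay time scales as ν^{−1/3}. -/
/-! With `a = (Kν/c²)^{1/3}` one has `δ̄(τ) = (c a / K) · w(a τ)` where `w(z) = Ai'(-z)/Ai(-z)`.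
Airy's equation `Ai'' = x Ai` makes `w` solve the Riccati equation `w' = z + w²`, which after
rescaling is `c δ̄' = ν τ + K δ̄²`. At the first zero `z₁` the numerator `Ai'(-z₁)` is positive:
`Ai` rises from `0` at `-z₁` to `Ai 0 > 0`, and `Ai'` is decreasing on `[-z₁, 0]` because
`Ai'' = x Ai ≤ 0` there. Hence `w(z) → +∞` as `z ↑ z₁`. -/

open Real Set Filter Topology

lemma slope_le_of_antitoneOn_deriv {f f' : ℝ → ℝ} {a b : ℝ} (hab : a < b)
    (hf : ∀ x ∈ Icc a b, HasDerivAt f (f' x) x) (hf' : AntitoneOn f' (Icc a b)) :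
    (f b - f a) / (b - a) ≤ f' a := by
  obtain ⟨ξ, hξ, hslope⟩ := exists_hasDerivAt_eq_slope f f' hab
    (fun x hx => (hf x hx).continuousAt.continuousWithinAt)
    (fun x hx => hf x (Ioo_subset_Icc_self hx))
  rw [← hslope]
  exact hf' (left_mem_Icc.2 hab.le) (Ioo_subset_Icc_self hξ) hξ.1.le

section Airy

variable {Ai dAi : ℝ → ℝ} (hAi : ∀ x, HasDerivAt Ai (dAi x) x)
  (hAi' : ∀ x, HasDerivAt dAi (x * Ai x) x)
include hAi hAi'

lemma airy_logDeriv_riccati (a τ : ℝ) (hτ : Ai (-(a * τ)) ≠ 0) :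
    HasDerivAt (fun t => dAi (-(a * t)) / Ai (-(a * t)))
      (a * (a * τ + (dAi (-(a * τ)) / Ai (-(a * τ))) ^ 2)) τ := by
  have hlin : HasDerivAt (fun t : ℝ => -(a * t)) (-a) τ := by
    simpa using (hasDerivAt_id' τ).const_mul (-a)
  refine ((hAi' _).comp τ hlin |>.div ((hAi _).comp τ hlin) hτ).congr_deriv ?_
  simp only [Function.comp_apply]
  field_simp
  ring

lemma airy_deriv_pos_at_first_zero {z₁ : ℝ} (hz₁pos : 0 < z₁) (hz₁ : Ai (-z₁) = 0)
    (hpos : ∀ z : ℝ, 0 ≤ z → z < z₁ → 0 < Ai (-z)) : 0 < dAi (-z₁) := by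
  have hAi_pos : ∀ x ∈ Ioo (-z₁) 0, 0 < Ai x := fun x hx => by
    simpa using hpos (-x) (by linarith [hx.2]) (by linarith [hx.1])
  have hanti : AntitoneOn dAi (Icc (-z₁) 0) := by
    refine antitoneOn_of_hasDerivWithinAt_nonpos (convex_Icc _ _)
      (fun x _ => (hAi' x).continuousAt.continuousWithinAt)
      (fun x _ => (hAi' x).hasDerivWithinAt) fun x hx => ?_
    rw [interior_Icc] at hx
    exact mul_nonpos_of_nonpos_of_nonneg hx.2.le (hAi_pos x hx).le
  have hslope := slope_le_of_antitoneOn_deriv (neg_lt_zero.2 hz₁pos) (fun x _ => hAi x) hanti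
  have hAi0 : 0 < Ai 0 := by simpa using hpos 0 le_rfl hz₁pos
  rw [hz₁, sub_zero, zero_sub, neg_neg] at hslope
  exact (div_pos hAi0 hz₁pos).trans_le hslope

lemma tendsto_airy_logDeriv_atTop {z₁ : ℝ} (hz₁pos : 0 < z₁) (hz₁ : Ai (-z₁) = 0)
    (hpos : ∀ z : ℝ, 0 ≤ z → z < z₁ → 0 < Ai (-z)) :
    Tendsto (fun z => dAi (-z) / Ai (-z)) (𝓝[<] z₁) atTop := by
  have hcont : ∀ {F : ℝ → ℝ}, Continuous F → Tendsto (fun z => F (-z)) (𝓝[<] z₁) (𝓝 (F (-z₁))) :=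
    fun hF => ((hF.comp continuous_neg).tendsto z₁).mono_left nhdsWithin_le_nhds
  have hnum : Tendsto (fun z => dAi (-z)) (𝓝[<] z₁) (𝓝 (dAi (-z₁))) :=
    hcont (continuous_iff_continuousAt.2 fun x => (hAi' x).continuousAt)
  have hden : Tendsto (fun z => Ai (-z)) (𝓝[<] z₁) (𝓝[>] 0) := by
    refine tendsto_nhdsWithin_iff.2 ⟨?_, ?_⟩
    · simpa [hz₁] using hcont (continuous_iff_continuousAt.2 fun x => (hAi x).continuousAt)
    · filter_upwards [Ioo_mem_nhdsLT hz₁pos] with z hz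
      exact hpos z hz.1.le hz.2
  simpa [div_eq_mul_inv] using
    hnum.pos_mul_atTop (airy_deriv_pos_at_first_zero hAi hAi' hz₁pos hz₁ hpos)
      hden.inv_tendsto_nhdsGT_zero

end Airy

lemma tendsto_const_mul_nhdsLT {a : ℝ} (ha : 0 < a) (x : ℝ) :
    Tendsto (fun t => a * t) (𝓝[<] x) (𝓝[<] (a * x)) :=
  tendsto_nhdsWithin_of_tendsto_nhds_of_eventually_within _
    (((continuous_const.mul continuous_id).tendsto x).mono_left nhdsWithin_le_nhds)
    (eventually_nhdsWithin_of_forall fun _ ht => mul_lt_mul_of_pos_left ht ha)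

lemma rpow_one_third_pow_three {x : ℝ} (hx : 0 ≤ x) : (x ^ ((1 : ℝ) / 3)) ^ 3 = x := by
  rw [one_div]
  exact_mod_cast rpow_inv_natCast_pow hx three_ne_zero

lemma rpow_neg_one_third {x : ℝ} (hx : 0 ≤ x) : x ^ (-(1 : ℝ) / 3) = (x ^ ((1 : ℝ) / 3))⁻¹ := by
  rw [neg_div, rpow_neg hx]

lemma amplitude_eq_scale {c K ν : ℝ} (hc : 0 < c) (hK : 0 < K) (hν : 0 < ν) :
    K ^ (-(2 : ℝ) / 3) * c ^ ((1 : ℝ) / 3) * ν ^ ((1 : ℝ) / 3) =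
      c * (K * ν / c ^ 2) ^ ((1 : ℝ) / 3) / K := by
  rw [div_rpow (by positivity) (by positivity), mul_rpow hK.le hν.le, ← rpow_natCast c 2,
    ← rpow_mul hc.le, eq_div_iff hK.ne', mul_div_assoc', eq_div_iff (by positivity)]
  have hK' : K ^ (-(2 : ℝ) / 3) * K = K ^ ((1 : ℝ) / 3) := by
    nth_rewrite 2 [← rpow_one K]
    rw [← rpow_add hK]
    norm_num
  have hc' : c ^ ((1 : ℝ) / 3) * c ^ ((2 : ℕ) * ((1 : ℝ) / 3)) = c := by
    rw [← rpow_add hc]; norm_num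
  linear_combination c ^ ((1 : ℝ) / 3) * c ^ ((2 : ℕ) * ((1 : ℝ) / 3)) * ν ^ ((1 : ℝ) / 3) * hK'
    + K ^ ((1 : ℝ) / 3) * ν ^ ((1 : ℝ) / 3) * hc'

theorem stmt_11_general (c K ν : ℝ) (hc : 0 < c) (hK : 0 < K) (hν : 0 < ν)
    (Ai dAi : ℝ → ℝ)
    (hAi : ∀ x, HasDerivAt Ai (dAi x) x)
    (hAi' : ∀ x, HasDerivAt dAi (x * Ai x) x)
    (z₁ : ℝ) (hz₁pos : 0 < z₁) (hz₁ : Ai (-z₁) = 0)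
    (hpos : ∀ z : ℝ, 0 ≤ z → z < z₁ → 0 < Ai (-z))
    (z δ : ℝ → ℝ)
    (hz : z = fun τ => (K * ν / c ^ 2) ^ ((1 : ℝ) / 3) * τ)
    (hδ : δ = fun τ =>
      K ^ (-(2 : ℝ) / 3) * c ^ ((1 : ℝ) / 3) * ν ^ ((1 : ℝ) / 3) *
        (dAi (-(z τ)) / Ai (-(z τ))))
    (τinf : ℝ) (hτ : τinf = z₁ * (K * ν / c ^ 2) ^ (-(1 : ℝ) / 3)) :
    (∀ τ ∈ Set.Ico (0 : ℝ) τinf, HasDerivAt δ ((ν * τ + K * δ τ ^ 2) / c) τ) ∧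
    Filter.Tendsto δ (nhdsWithin τinf (Set.Iio τinf)) Filter.atTop := by
  subst hz hδ hτ
  rw [amplitude_eq_scale hc hK hν, rpow_neg_one_third (by positivity)]
  have ha : 0 < (K * ν / c ^ 2) ^ ((1 : ℝ) / 3) := by positivity
  have hcube : ((K * ν / c ^ 2) ^ ((1 : ℝ) / 3)) ^ 3 * c ^ 2 = K * ν := by
    rw [rpow_one_third_pow_three (by positivity)]; field_simp
  generalize (K * ν / c ^ 2) ^ ((1 : ℝ) / 3) = a at ha hcube ⊢
  have haτ : a * (z₁ * a⁻¹) = z₁ := by field_simp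
  refine ⟨fun τ hτ => ?_, ?_⟩
  · have hzτ : a * τ < z₁ := haτ ▸ mul_lt_mul_of_pos_left hτ.2 ha
    refine ((airy_logDeriv_riccati hAi hAi' a τ
      (hpos _ (mul_nonneg ha.le hτ.1) hzτ).ne').const_mul (c * a / K)).congr_deriv ?_
    field_simp
    linear_combination τ * hcube
  · have hw := (tendsto_airy_logDeriv_atTop hAi hAi' hz₁pos hz₁ hpos).comp
      (haτ ▸ tendsto_const_mul_nhdsLT ha (z₁ * a⁻¹))
    exact hw.const_mul_atTop (by positivity)

theorem stmt_11 (c K ν : ℝ) (hc : 0 < c) (hK : 0 < K) (hν : 0 < ν)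
    (Ai dAi : ℝ → ℝ)
    (hAi : ∀ x, HasDerivAt Ai (dAi x) x)
    (hAi' : ∀ x, HasDerivAt dAi (x * Ai x) x)
    (z₁ : ℝ) (hz₁pos : 0 < z₁) (hz₁ : Ai (-z₁) = 0)
    (hpos : ∀ z : ℝ, 0 ≤ z → z < z₁ → 0 < Ai (-z))
    (hz₁approx : |z₁ - 2.3381| < 0.001)
    (z δ : ℝ → ℝ)
    (hz : z = fun τ => (K * ν / c ^ 2) ^ ((1 : ℝ) / 3) * τ)
    (hδ : δ = fun τ =>
      K ^ (-(2 : ℝ) / 3) * c ^ ((1 : ℝ) / 3) * ν ^ ((1 : ℝ) / 3) *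
        (dAi (-(z τ)) / Ai (-(z τ))))
    (τinf : ℝ) (hτ : τinf = z₁ * (K * ν / c ^ 2) ^ (-(1 : ℝ) / 3)) :
    (∀ τ ∈ Set.Ico (0 : ℝ) τinf, HasDerivAt δ ((ν * τ + K * δ τ ^ 2) / c) τ) ∧
    Filter.Tendsto δ (nhdsWithin τinf (Set.Iio τinf)) Filter.atTop :=
  stmt_11_general c K ν hc hK hν Ai dAi hAi hAi' z₁ hz₁pos hz₁ hpos z δ hz hδ τinf hτ
end

section
/- For ν, K > 0, the time for the Boutroux variable to blow up, X∞ = (1/√2)·(3/K)^{1/4}·ν^{−1/4}·F(π, 1/√2), when transformed back via X = (4/5)·τ̄^{5/4}, yields τ̄∞ = (5X∞/4)^{4/5}, which is proportional to (Kν)^{−1/5}. In particular, the delayed switching time of the undamped arch under a ramp load of rate ν scales as ν^{−1/5}. -/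
open Real Set

/-!
The blow-up value `X∞` scales like `K^(-1/4) ν^(-1/4) = (K ν)^(-1/4)`, because the
incomplete elliptic integral `F(π, 1/√2)` is a nonnegative constant; raising to the power `4/5`
turns this into the `(K ν)^(-1/5)` law for `τ̄∞`.
-/

lemma intervalIntegral_one_div_sqrt_nonneg {φ : ℝ} (hφ : 0 ≤ φ) (g : ℝ → ℝ) :
    0 ≤ ∫ θ in (0 : ℝ)..φ, 1 / Real.sqrt (g θ) :=
  intervalIntegral.integral_nonneg hφ fun _ _ => by positivity

lemma div_rpow_mul_rpow_neg {a K ν : ℝ} (ha : 0 ≤ a) (hK : 0 < K) (hν : 0 < ν) (r : ℝ) :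
    (a / K) ^ r * ν ^ (-r) = a ^ r * (K * ν) ^ (-r) := by
  rw [div_rpow ha hK.le, rpow_neg hν.le, rpow_neg (mul_pos hK hν).le, mul_rpow hK.le hν.le]
  field_simp

lemma mul_rpow_rpow {c x : ℝ} (hc : 0 ≤ c) (hx : 0 ≤ x) (p q : ℝ) :
    (c * x ^ p) ^ q = c ^ q * x ^ (p * q) := by
  rw [mul_rpow hc (rpow_nonneg hx p), rpow_mul hx]

theorem stmt_14 (K ν : ℝ) (hK : 0 < K) (hν : 0 < ν)
    (F : ℝ → ℝ → ℝ)
    (hF : F = fun φ k => ∫ θ in (0 : ℝ)..φ, 1 / Real.sqrt (1 - k ^ 2 * Real.sin θ ^ 2))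
    (Xinf : ℝ)
    (hX : Xinf = (1 / Real.sqrt 2) * (3 / K) ^ ((1 : ℝ) / 4) * ν ^ (-(1 : ℝ) / 4) *
      F π (1 / Real.sqrt 2))
    (τinf : ℝ) (hτ : τinf = (5 * Xinf / 4) ^ ((4 : ℝ) / 5)) :
    τinf = ((5 / 4) * (1 / Real.sqrt 2) * 3 ^ ((1 : ℝ) / 4) * F π (1 / Real.sqrt 2)) ^ ((4 : ℝ) / 5)
        * (K * ν) ^ (-(1 : ℝ) / 5) := by
  have hF_nonneg : 0 ≤ F π (1 / Real.sqrt 2) := by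
    rw [hF]
    exact intervalIntegral_one_div_sqrt_nonneg pi_pos.le _
  have hX_scaling : 5 * Xinf / 4 = ((5 / 4) * (1 / Real.sqrt 2) * 3 ^ ((1 : ℝ) / 4) *
      F π (1 / Real.sqrt 2)) * (K * ν) ^ (-(1 : ℝ) / 4) := by
    have h := div_rpow_mul_rpow_neg (zero_le_three : (0 : ℝ) ≤ 3) hK hν (1 / 4)
    rw [hX, neg_div, mul_assoc (1 / Real.sqrt 2), h]
    ring
  rw [hτ, hX_scaling, mul_rpow_rpow (by positivity) (mul_pos hK hν).le]
  norm_num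
end

section
/- For constants c, K̄, ε̄ > 0, the solution of the reduced multi-mode equation c·δ̄' = ε̄ + K̄·δ̄² with δ̄(0) = 0 blows up at τ∞ = (π/2)·c·K̄^{−1/2}·ε̄^{−1/2}; hence the multi-mode switching time has the same ε^{−1/2} power law as the single-mode case, with K replaced by the projected curvature K̄. -/
/-! With `ω = √(pq)`, the function `δ t = √(p/q) · tan (ω t)` solves `δ' = p + q δ²`, `δ 0 = 0`,
because `tan' = 1 + tan²` and `√(p/q) · ω = p`, `q · √(p/q)² = p`; it blows up where `ω t = π/2`.
For `c δ' = ε + K δ²` take `p = ε/c`, `q = K/c`, so that `π / (2ω) = (π/2) c K^{-1/2} ε^{-1/2}`. -/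

open Real Set Filter Topology

theorem Real.rpow_neg_one_div_two {x : ℝ} (hx : 0 ≤ x) : x ^ (-(1 : ℝ) / 2) = (√x)⁻¹ := by
  rw [sqrt_eq_rpow, ← rpow_neg hx, neg_div]

namespace Riccati

noncomputable def sol (p q t : ℝ) : ℝ := √(p / q) * tan (√(p * q) * t)

noncomputable def blowupTime (p q : ℝ) : ℝ := π / 2 / √(p * q)

variable {p q : ℝ}

@[simp]
theorem sol_zero (p q : ℝ) : sol p q 0 = 0 := by simp [sol]

theorem hasDerivAt_sol (hp : 0 < p) (hq : 0 < q) {t : ℝ}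
    (ht : t ∈ Ioo (-blowupTime p q) (blowupTime p q)) :
    HasDerivAt (sol p q) (p + q * sol p q t ^ 2) t := by
  set ω := √(p * q)
  have hω : 0 < ω := sqrt_pos.2 (mul_pos hp hq)
  have hcos : cos (ω * t) ≠ 0 := by
    refine (cos_pos_of_mem_Ioo ⟨?_, ?_⟩).ne'
    · have := ht.1
      rw [blowupTime, ← neg_div, div_lt_iff₀ hω] at this
      linarith
    · rw [← lt_div_iff₀' hω]
      exact ht.2
  have hderiv : HasDerivAt (sol p q) (√(p / q) * ω * (1 + tan (ω * t) ^ 2)) t := by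
    have h := ((hasDerivAt_tan hcos).comp t ((hasDerivAt_id t).const_mul ω)).const_mul √(p / q)
    refine h.congr_deriv ?_
    rw [one_div, ← inv_one_add_tan_sq hcos, inv_inv]
    ring
  have hamp : √(p / q) * ω = p := by
    rw [← sqrt_mul (div_pos hp hq).le, show p / q * (p * q) = p ^ 2 by field_simp,
      sqrt_sq hp.le]
  have hsq : q * √(p / q) ^ 2 = p := by
    rw [sq_sqrt (div_pos hp hq).le]
    field_simp
  convert hderiv using 1
  rw [sol, mul_pow, ← mul_assoc, hsq, hamp]
  ring

theorem tendsto_sol_atTop (hp : 0 < p) (hq : 0 < q) :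
    Tendsto (sol p q) (𝓝[<] blowupTime p q) atTop := by
  have hω : 0 < √(p * q) := sqrt_pos.2 (mul_pos hp hq)
  have hangle : Tendsto (√(p * q) * ·) (𝓝[<] blowupTime p q) (𝓝[<] (π / 2)) := by
    have hT : √(p * q) * blowupTime p q = π / 2 := mul_div_cancel₀ _ hω.ne'
    refine tendsto_nhdsWithin_of_tendsto_nhds_of_eventually_within _ ?_ ?_
    · rw [← hT]
      exact (tendsto_id.const_mul _).mono_left nhdsWithin_le_nhds
    · filter_upwards [self_mem_nhdsWithin] with t ht
      rw [mem_Iio, ← hT]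
      exact mul_lt_mul_of_pos_left ht hω
  exact (tendsto_tan_pi_div_two.comp hangle).const_mul_atTop (sqrt_pos.2 (div_pos hp hq))

end Riccati

theorem stmt_16 (c Kb εb : ℝ) (hc : 0 < c) (hK : 0 < Kb) (hε : 0 < εb)
    (τinf : ℝ) (hτ : τinf = (π / 2) * c * Kb ^ (-(1 : ℝ) / 2) * εb ^ (-(1 : ℝ) / 2)) :
    ∃ δ : ℝ → ℝ, δ 0 = 0 ∧
      (∀ τ ∈ Set.Ico (0 : ℝ) τinf, HasDerivAt δ ((εb + Kb * δ τ ^ 2) / c) τ) ∧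
      Filter.Tendsto δ (nhdsWithin τinf (Set.Iio τinf)) Filter.atTop := by
  have hp : 0 < εb / c := div_pos hε hc
  have hq : 0 < Kb / c := div_pos hK hc
  have hT : τinf = Riccati.blowupTime (εb / c) (Kb / c) := by
    rw [hτ, Riccati.blowupTime, rpow_neg_one_div_two hK.le, rpow_neg_one_div_two hε.le,
      div_mul_div_comm, sqrt_div' _ (mul_self_nonneg c), sqrt_mul_self hc.le, sqrt_mul hε.le]
    field_simp
  subst hT
  refine ⟨Riccati.sol (εb / c) (Kb / c), Riccati.sol_zero _ _, fun τ hτ => ?_,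
    Riccati.tendsto_sol_atTop hp hq⟩
  convert Riccati.hasDerivAt_sol hp hq ⟨by linarith [hτ.1, hτ.2], hτ.2⟩ using 1
  ring
end
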